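/- Let n ≥ 2, d ≥ 2 and m = Nat.choose (n + d − 1) (d − 1). The subspace of EuclideanSpace ℂ (Fin n → Fin d) spanned by the generalized Dicke states D_n^{k} over all excitation vectors k : Fin d → ℕ with ∑ a, k a = n and k a < n for every a (equivalently, k is not of the form n·δ_a) has finrank m − d, and every nonzero vector in this span is genuinely multipartite entangled; i.e., this span is a GES of dimension m − d. -/

import Mathlib

/-- The unnormalized generalized Dicke state of `n` qudits with excitation vector
`k : Fin d → ℕ`: the uniform superposition of all basis vectors `|i₁⋯iₙ⟩` in which
the letter `a` occurs exactly `k a` times. -/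
noncomputable def genDicke (n d : ℕ) (k : Fin d → ℕ) :
    EuclideanSpace ℂ (Fin n → Fin d) :=
  WithLp.toLp 2 (fun i => if ∀ a : Fin d, (Finset.univ.filter fun j => i j = a).card = k a then 1 else 0)

/-- `ψ` is biseparable across the bipartition `(S, Sᶜ)` of the `n` qudits. -/
def Biseparable {n d : ℕ} (S : Set (Fin n))
    (ψ : EuclideanSpace ℂ (Fin n → Fin d)) : Prop :=
  ∃ (φ : ((j : S) → Fin d) → ℂ) (χ : ((j : ↥Sᶜ) → Fin d) → ℂ),
    ∀ i, ψ i = φ (fun j => i j.val) * χ (fun j => i j.val)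

/-- A nonzero vector is genuinely multipartite entangled if it is not biseparable
across any nontrivial bipartition. -/
def GME {n d : ℕ} (ψ : EuclideanSpace ℂ (Fin n → Fin d)) : Prop :=
  ψ ≠ 0 ∧ ∀ S : Set (Fin n), S ≠ ∅ → S ≠ Set.univ → ¬ Biseparable S ψ

/-! The Dicke states with distinct excitation vectors have disjoint supports, hence are orthogonal
and linearly independent; stars and bars counts the excitation vectors, and exactly `d` of them,
the `n • δ_a`, are excluded.

Every vector `ψ` of the span is permutation-symmetric and vanishes on the constant configurations
`|a ⋯ a⟩`. If `ψ` factorizes across `(S, Sᶜ)`, then for `s ∈ S`, `t ∉ S` its amplitudes satisfy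
`ψ(i) ψ(i ∘ (s t)) = ψ(i[t ↦ i s]) ψ(i[s ↦ i t])`. Take a nonzero amplitude `ψ(i)` of minimal
letter sum `∑ⱼ i j`, permuted so that `i s < i t`: then `ψ(i[t ↦ i s]) = 0` by minimality, while
the left-hand side is `ψ(i)² ≠ 0`. -/

open Finset

lemma Finset.Nat.card_antidiagonalTuple (d n : ℕ) :
    #(Nat.antidiagonalTuple d n) = (d + n - 1).choose n := by
  rw [card_eq_of_equiv_fintype ((Equiv.subtypeEquivRight fun _ => Nat.mem_antidiagonalTuple).trans
    (Sym.equivNatSumOfFintype (Fin d) n).symm), Sym.card_sym_eq_choose, Fintype.card_fin]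

lemma eq_single_of_sum_eq_of_le {ι : Type*} [Fintype ι] [DecidableEq ι] {k : ι → ℕ} {a : ι} {n : ℕ}
    (hk : ∑ b, k b = n) (ha : n ≤ k a) : k = Pi.single a n := by
  have hsplit := add_sum_erase univ k (mem_univ a)
  have hrest : ∀ b ∈ univ.erase a, k b = 0 := sum_eq_zero_iff.1 (by omega)
  funext b
  by_cases hb : b = a
  · subst hb
    rw [Pi.single_eq_same]
    omega
  · rw [Pi.single_eq_of_ne hb, hrest b (mem_erase.2 ⟨hb, mem_univ b⟩)]

lemma restrict_update_of_notMem {α β : Type*} [DecidableEq α] {S : Set α} {t : α} (ht : t ∉ S)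
    (f : α → β) (v : β) : (fun j : S => Function.update f t v j) = fun j : S => f j :=
  funext fun j => Function.update_of_ne (ne_of_mem_of_not_mem j.2 ht) _ _

lemma Equiv.Perm.exists_apply_eq_apply_eq {α : Type*} [DecidableEq α] {s t p q : α} (hst : s ≠ t)
    (hpq : p ≠ q) : ∃ σ : Equiv.Perm α, σ s = p ∧ σ t = q := by
  set τ := Equiv.swap s p
  have hτ : τ t ≠ p := by
    rw [Ne, Equiv.swap_apply_eq_iff, Equiv.swap_apply_right]
    exact hst.symm
  exact ⟨Equiv.swap (τ t) q * τ, by simp [τ, Equiv.swap_apply_of_ne_of_ne hτ.symm hpq],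
    Equiv.swap_apply_left _ _⟩

section

variable {n d : ℕ}

def excitation (i : Fin n → Fin d) (a : Fin d) : ℕ := #{j | i j = a}

lemma genDicke_apply (k : Fin d → ℕ) (i : Fin n → Fin d) :
    genDicke n d k i = if excitation i = k then 1 else 0 :=
  if_congr funext_iff.symm rfl rfl

lemma excitation_comp_perm (i : Fin n → Fin d) (σ : Equiv.Perm (Fin n)) :
    excitation (i ∘ σ) = excitation i := by
  funext a
  exact card_equiv σ (by simp)

lemma excitation_const (a : Fin d) : excitation (fun _ : Fin n => a) a = n := by
  simp [excitation]

lemma exists_excitation_eq {k : Fin d → ℕ} (hk : ∑ a, k a = n) :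
    ∃ i : Fin n → Fin d, excitation i = k := by
  set s := (Sym.equivNatSumOfFintype (Fin d) n).symm ⟨k, hk⟩
  let v : List.Vector (Fin d) n := ⟨(s : Multiset (Fin d)).toList, by simp⟩
  refine ⟨v.get, funext fun a => ?_⟩
  rw [excitation, Fin.card_filter_univ_eq_vector_get_eq_count, ← Multiset.coe_count,
    show (v.toList : Multiset (Fin d)) = s from Multiset.coe_toList _,
    ← Sym.coe_equivNatSumOfFintype_apply_apply, Equiv.apply_symm_apply]

lemma genDicke_ne_zero {k : Fin d → ℕ} (hk : ∑ a, k a = n) : genDicke n d k ≠ 0 := by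
  obtain ⟨i, hi⟩ := exists_excitation_eq hk
  intro h
  simpa [genDicke_apply, hi] using congrArg (· i) h

lemma inner_genDicke_eq_zero {k k' : Fin d → ℕ} (h : k ≠ k') :
    inner ℂ (genDicke n d k) (genDicke n d k') = 0 := by
  rw [PiLp.inner_apply]
  refine sum_eq_zero fun i _ => ?_
  simp only [genDicke_apply]
  split_ifs <;> simp_all

lemma card_filter_antidiagonalTuple_forall_lt (hn : n ≠ 0) :
    #{k ∈ Nat.antidiagonalTuple d n | ∀ a, k a < n} = (d + n - 1).choose n - d := by
  have hbad : {k ∈ Nat.antidiagonalTuple d n | ¬ ∀ a, k a < n}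
      = univ.image fun a => Pi.single a n := by
    ext k
    simp only [mem_filter, Nat.mem_antidiagonalTuple, mem_image, mem_univ, true_and, not_forall,
      not_lt]
    constructor
    · rintro ⟨hk, a, ha⟩
      exact ⟨a, (eq_single_of_sum_eq_of_le hk ha).symm⟩
    · rintro ⟨a, rfl⟩
      exact ⟨by simp, a, by simp⟩
  have hinj : Function.Injective fun a : Fin d => Pi.single a n := fun a b h => by
    by_contra hab
    simpa [Pi.single_eq_of_ne hab, hn] using congrFun h a
  have hsplit :=
    card_filter_add_card_filter_not (s := Nat.antidiagonalTuple d n) (fun k => ∀ a, k a < n)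
  rw [hbad, card_image_of_injective _ hinj, card_univ, Fintype.card_fin,
    Nat.card_antidiagonalTuple] at hsplit
  omega

def gmeDickeStates (n d : ℕ) : Set (EuclideanSpace ℂ (Fin n → Fin d)) :=
  {ψ | ∃ k : Fin d → ℕ, (∑ a, k a) = n ∧ (∀ a, k a < n) ∧ ψ = genDicke n d k}

lemma finrank_span_gmeDickeStates (hn : n ≠ 0) :
    Module.finrank ℂ (Submodule.span ℂ (gmeDickeStates n d)) = (d + n - 1).choose n - d := by
  set K := {k ∈ Nat.antidiagonalTuple d n | ∀ a, k a < n}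
  have hK : gmeDickeStates n d = Set.range fun k : K => genDicke n d k := by
    ext ψ
    simp [gmeDickeStates, K, Nat.mem_antidiagonalTuple, eq_comm, and_assoc]
  have hli : LinearIndependent ℂ fun k : K => genDicke n d k :=
    linearIndependent_of_ne_zero_of_inner_eq_zero
      (fun k => genDicke_ne_zero (Nat.mem_antidiagonalTuple.1 (mem_filter.1 k.2).1))
      (fun k k' h => inner_genDicke_eq_zero (Subtype.coe_injective.ne h))
  rw [hK, finrank_span_eq_card hli, Fintype.card_coe, card_filter_antidiagonalTuple_forall_lt hn]

def symmetricVanishingOnConstants (n d : ℕ) :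
    Submodule ℂ (EuclideanSpace ℂ (Fin n → Fin d)) where
  carrier := {ψ | (∀ (σ : Equiv.Perm (Fin n)) i, ψ (i ∘ σ) = ψ i) ∧ ∀ a, ψ (fun _ => a) = 0}
  add_mem' := fun ⟨hσ, hc⟩ ⟨hσ', hc'⟩ => ⟨fun σ i => by simp [hσ, hσ'], fun a => by simp [hc, hc']⟩
  zero_mem' := ⟨fun _ _ => rfl, fun _ => rfl⟩
  smul_mem' := fun r _ ⟨hσ, hc⟩ => ⟨fun σ i => by simp [hσ], fun a => by simp [hc]⟩

lemma genDicke_mem_symmetricVanishingOnConstants {k : Fin d → ℕ} (hk : ∀ a, k a < n) :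
    genDicke n d k ∈ symmetricVanishingOnConstants n d := by
  refine ⟨fun σ i => by simp only [genDicke_apply, excitation_comp_perm], fun a => ?_⟩
  rw [genDicke_apply, if_neg]
  rintro rfl
  exact (hk a).ne (excitation_const a)

lemma span_gmeDickeStates_le :
    Submodule.span ℂ (gmeDickeStates n d) ≤ symmetricVanishingOnConstants n d :=
  Submodule.span_le.2 fun _ ⟨_, _, hk, hψ⟩ => hψ ▸ genDicke_mem_symmetricVanishingOnConstants hk

lemma Biseparable.mul_comp_swap {S : Set (Fin n)} {ψ : EuclideanSpace ℂ (Fin n → Fin d)}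
    (h : Biseparable S ψ) {s t : Fin n} (hs : s ∈ S) (ht : t ∉ S) (i : Fin n → Fin d) :
    ψ i * ψ (i ∘ Equiv.swap s t) =
      ψ (Function.update i t (i s)) * ψ (Function.update i s (i t)) := by
  obtain ⟨φ, χ, hψ⟩ := h
  have hs' : s ∉ Sᶜ := fun h => h hs
  rw [hψ, hψ, hψ, hψ, Equiv.comp_swap_eq_update, restrict_update_of_notMem ht,
    restrict_update_of_notMem hs', Function.update_comm (ne_of_mem_of_not_mem hs ht).symm,
    restrict_update_of_notMem hs', restrict_update_of_notMem ht]
  ring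

lemma sum_val_update_lt (i : Fin n → Fin d) {t : Fin n} {a : Fin d} (ha : a < i t) :
    ∑ j, (Function.update i t a j : ℕ) < ∑ j, (i j : ℕ) := by
  refine sum_lt_sum (fun j _ => ?_) ⟨t, mem_univ t, by simpa using ha⟩
  rcases eq_or_ne j t with rfl | hj
  · simpa using ha.le
  · simp [hj]

lemma exists_ne_zero_update_eq_zero {ψ : EuclideanSpace ℂ (Fin n → Fin d)}
    (hψ : ψ ∈ symmetricVanishingOnConstants n d) (hψ0 : ψ ≠ 0) {s t : Fin n} (hst : s ≠ t) :
    ∃ i, ψ i ≠ 0 ∧ ψ (Function.update i t (i s)) = 0 := by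
  obtain ⟨hsymm, hconst⟩ := hψ
  obtain ⟨i₀, hi₀⟩ : ∃ i, ψ i ≠ 0 := by
    by_contra! h
    exact hψ0 (PiLp.ext h)
  -- Overwriting a letter by a smaller one lowers the letter sum, so a minimizer is extremal.
  obtain ⟨i, hi, hmin⟩ := exists_min_image {i | ψ i ≠ 0}
    (fun i : Fin n → Fin d => ∑ j, (i j : ℕ)) ⟨i₀, by simpa using hi₀⟩
  rw [mem_filter] at hi
  obtain ⟨p, q, hpq⟩ : ∃ p q, i p < i q := by
    by_contra! h
    have hi_const : i = fun _ => i s := funext fun q => le_antisymm (h s q) (h q s)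
    apply hi.2
    rw [hi_const]
    exact hconst _
  obtain ⟨σ, hσs, hσt⟩ := Equiv.Perm.exists_apply_eq_apply_eq hst (ne_of_apply_ne i hpq.ne)
  refine ⟨i ∘ σ, by rw [hsymm]; exact hi.2, ?_⟩
  by_contra h
  have hle := hmin _ (mem_filter.2 ⟨mem_univ _, h⟩)
  have hlt := sum_val_update_lt (i ∘ σ) (t := t) (a := (i ∘ σ) s) (by simpa [hσs, hσt])
  have hperm : ∑ j, ((i ∘ σ) j : ℕ) = ∑ j, (i j : ℕ) := Equiv.sum_comp σ fun j => (i j : ℕ)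
  omega

theorem gme_of_mem_symmetricVanishingOnConstants {ψ : EuclideanSpace ℂ (Fin n → Fin d)}
    (hψ : ψ ∈ symmetricVanishingOnConstants n d) (hψ0 : ψ ≠ 0) : GME ψ := by
  refine ⟨hψ0, fun S hS hSu hsep => ?_⟩
  obtain ⟨s, hs⟩ := Set.nonempty_iff_ne_empty.2 hS
  obtain ⟨t, ht⟩ := Set.nonempty_compl.2 hSu
  obtain ⟨i, hi, hupd⟩ := exists_ne_zero_update_eq_zero hψ hψ0 (ne_of_mem_of_not_mem hs ht)
  have hminor := hsep.mul_comp_swap hs ht i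
  rw [hψ.1, hupd, zero_mul] at hminor
  exact hi (mul_self_eq_zero.1 hminor)

end

/-- Lemma 2: the span of the GME generalized Dicke states (those whose excitation
vector has all components `< n`) is a GES of dimension `m − d`, where
`m = (n + d − 1).choose (d − 1)`. -/
theorem genDicke_span_GES (n d : ℕ) (hn : 2 ≤ n) (hd : 2 ≤ d)
    (m : ℕ) (hm : m = Nat.choose (n + d - 1) (d - 1)) :
    Module.finrank ℂ
        ↥(Submodule.span ℂ {ψ | ∃ k : Fin d → ℕ,
            (∑ a, k a) = n ∧ (∀ a, k a < n) ∧ ψ = genDicke n d k}) = m - d ∧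
    ∀ ψ ∈ Submodule.span ℂ {ψ | ∃ k : Fin d → ℕ,
            (∑ a, k a) = n ∧ (∀ a, k a < n) ∧ ψ = genDicke n d k},
      ψ ≠ 0 → GME ψ := by
  refine ⟨(finrank_span_gmeDickeStates (by omega)).trans ?_,
    fun ψ hψ hψ0 => gme_of_mem_symmetricVanishingOnConstants (span_gmeDickeStates_le hψ) hψ0⟩
  rw [hm, Nat.choose_symm_of_eq_add (show n + d - 1 = d - 1 + n by omega), Nat.add_comm n d]
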